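/- arXiv:1212.1185 — 4 statements merged into one kernel-verified Lean document; each statement's English description precedes it below -/
import Mathlib

section
/- Let n ≥ 3. If f : Sym(n) → Sym(n) is a bijection that preserves Hamming distance, i.e., d_H(f(φ), f(ψ)) = d_H(φ,ψ) for all φ, ψ ∈ Sym(n), then there exist σ, τ ∈ Sym(n) such that either f(φ) = σφτ for all φ ∈ Sym(n), or f(φ) = σφ⁻¹τ for all φ ∈ Sym(n). Consequently the group of Hamming isometries of Sym(n) has order 2·(n!)². -/
/-!
Normalise the isometry `f` to `g = (f 1)⁻¹ * f`, which fixes `1` and hence preserves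
`#φ.support = permDist φ 1`; in particular `g` permutes the transpositions. Two distinct
transpositions are at distance `3` or `4` according as they share a point or not, and three of them
lie in a common `3`-set exactly when some permutation of support `3` is at distance `2` from all
three. Hence `g` sends the transpositions through a point `a` to transpositions through a point
`σ a`, and `σ` is a permutation with `g (swap a b) = swap (σ a) (σ b)`.

After conjugating by `σ`, the isometry `h` fixes `1` and every transposition. Distances to these
determine the fixed points of `φ` and, for every `x`, the pair `{φ x, φ⁻¹ x}`; so `h` maps each
`3`-cycle to itself or to its inverse. Two `3`-cycles sharing two points are at distance `3` from
one another and at distance `4` from the other's inverse, so the choice is the same for all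
`3`-cycles. Composing with inversion if necessary, `h` fixes every permutation of support at most
`3`, and the distances to those determine a permutation, so `h` is the identity.

For the count, the maps `φ ↦ σ * φ * τ` and `φ ↦ σ * φ⁻¹ * τ` are pairwise distinct because
`Sym(n)` has trivial centre and is not abelian.
-/

/-- The Hamming distance between two permutations: the number of points
where they disagree. -/
def permDist {n : ℕ} (φ ψ : Equiv.Perm (Fin n)) : ℕ :=
  (Finset.univ.filter fun i => φ i ≠ ψ i).card

open Equiv Finset

section Permutations

variable {α : Type*} [DecidableEq α] [Fintype α]

theorem exists_ne_and_ne (h : 2 < Fintype.card α) (a b : α) : ∃ c, c ≠ a ∧ c ≠ b := by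
  obtain ⟨c, -, hc⟩ := exists_mem_notMem_of_card_lt_card (s := {a, b}) (t := univ)
    (card_le_two.trans_lt h)
  exact ⟨c, by simpa [not_or] using hc⟩

theorem Equiv.Perm.IsSwap.exists_eq_swap_of_mem_support {t : Perm α} (ht : t.IsSwap) {p : α}
    (hp : p ∈ t.support) : ∃ q, p ≠ q ∧ t = swap p q := by
  obtain ⟨a, b, hab, rfl⟩ := ht
  rw [Perm.support_swap hab, mem_insert, mem_singleton] at hp
  rcases hp with rfl | rfl
  · exact ⟨b, hab, rfl⟩
  · exact ⟨a, hab.symm, swap_comm _ _⟩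

theorem Equiv.Perm.IsSwap.eq_swap_of_mem_support {t : Perm α} (ht : t.IsSwap) {p q : α}
    (hp : p ∈ t.support) (hq : q ∈ t.support) (hpq : p ≠ q) : t = swap p q := by
  obtain ⟨r, hpr, rfl⟩ := ht.exists_eq_swap_of_mem_support hp
  rw [Perm.support_swap hpr, mem_insert, mem_singleton] at hq
  rcases hq with rfl | rfl
  · exact absurd rfl hpq
  · rfl

theorem Equiv.Perm.eq_one_or_isSwap_of_card_support_le_two {χ : Perm α} (h : #χ.support ≤ 2) :
    χ = 1 ∨ χ.IsSwap := by
  obtain h0 | h1 | h2 : #χ.support = 0 ∨ #χ.support = 1 ∨ #χ.support = 2 := by omega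
  · exact Or.inl (Perm.card_support_eq_zero.mp h0)
  · exact absurd h1 (Perm.card_support_ne_one χ)
  · exact Or.inr (Perm.card_support_eq_two.mp h2)

theorem Equiv.Perm.eq_one_of_forall_mul_comm (hα : 2 < Fintype.card α) {z : Perm α}
    (hz : ∀ g, z * g = g * z) : z = 1 := by
  refine Equiv.ext fun a => ?_
  rw [Perm.one_apply]
  by_contra hza
  obtain ⟨c, hca, hcz⟩ := exists_ne_and_ne hα a (z a)
  have := DFunLike.congr_fun (hz (swap a c)) a
  rw [Perm.mul_apply, Perm.mul_apply, swap_apply_left, swap_apply_of_ne_of_ne hza hcz.symm] at this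
  exact hca (z.injective this)

end Permutations

section ThreeCycle

variable {α : Type*} [DecidableEq α]

/-- The `3`-cycle `a ↦ b ↦ c ↦ a` (for distinct `a`, `b`, `c`). -/
def threeCycle (a b c : α) : Perm α := swap a b * swap b c

variable {a b c : α}

theorem threeCycle_apply_left (hab : a ≠ b) (hac : a ≠ c) : threeCycle a b c a = b := by
  simp [threeCycle, swap_apply_of_ne_of_ne hab hac]

theorem threeCycle_apply_mid (hac : a ≠ c) (hbc : b ≠ c) : threeCycle a b c b = c := by
  simp [threeCycle, swap_apply_of_ne_of_ne hac.symm hbc.symm]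

theorem threeCycle_apply_right : threeCycle a b c c = a := by
  simp [threeCycle]

theorem threeCycle_apply_of_ne {x : α} (hxa : x ≠ a) (hxb : x ≠ b) (hxc : x ≠ c) :
    threeCycle a b c x = x := by
  simp [threeCycle, swap_apply_of_ne_of_ne, *]

theorem threeCycle_inv (a b c : α) : (threeCycle a b c)⁻¹ = threeCycle c b a := by
  simp [threeCycle, swap_comm]

theorem threeCycle_rotate (hab : a ≠ b) (hac : a ≠ c) (hbc : b ≠ c) :
    threeCycle a b c = threeCycle b c a := by
  ext x
  by_cases hxa : x = a
  · rw [hxa, threeCycle_apply_left hab hac, threeCycle_apply_right]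
  by_cases hxb : x = b
  · rw [hxb, threeCycle_apply_mid hac hbc, threeCycle_apply_left hbc hab.symm]
  by_cases hxc : x = c
  · rw [hxc, threeCycle_apply_right, threeCycle_apply_mid hab.symm hac.symm]
  rw [threeCycle_apply_of_ne hxa hxb hxc, threeCycle_apply_of_ne hxb hxc hxa]

variable [Fintype α]

theorem support_threeCycle (hab : a ≠ b) (hac : a ≠ c) (hbc : b ≠ c) :
    (threeCycle a b c).support = {a, b, c} :=
  Perm.support_swap_mul_swap (by simp [*])

theorem card_support_threeCycle (hab : a ≠ b) (hac : a ≠ c) (hbc : b ≠ c) :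
    #(threeCycle a b c).support = 3 := by
  rw [support_threeCycle hab hac hbc, card_insert_of_notMem (by simp [*]), card_pair hbc]

theorem eq_threeCycle_or_eq_threeCycle_of_support_eq {ρ : Perm α} (hab : a ≠ b) (hac : a ≠ c)
    (hbc : b ≠ c) (hρ : ρ.support = {a, b, c}) : ρ = threeCycle a b c ∨ ρ = threeCycle c b a := by
  have h3 : ρ.IsThreeCycle := by
    rw [← card_support_eq_three_iff, hρ, card_insert_of_notMem (by simp [*]), card_pair hbc]
  have ha : a ∈ ρ.support := by simp [hρ]
  have hnodup := h3.nodup_iff_mem_support.mpr ha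
  have hρa : ρ a ∈ ρ.support := Perm.apply_mem_support.mpr ha
  have hρρa : ρ (ρ a) ∈ ρ.support := Perm.apply_mem_support.mpr hρa
  rw [h3.eq_swap_mul_swap_iff_mem_support.mpr ha]
  simp only [hρ, mem_insert, mem_singleton] at hρa hρρa
  simp only [List.nodup_cons, List.mem_cons, List.not_mem_nil] at hnodup
  rcases hρa with h | h | h <;> rcases hρρa with h' | h' | h' <;> simp_all
  · exact Or.inl rfl
  · exact Or.inr (threeCycle_rotate hac hab (Ne.symm hbc))

end ThreeCycle

/-- Connectivity of the Johnson graph. -/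
theorem Finset.induction_on_exchange {α : Type*} [DecidableEq α] {P : Finset α → Prop}
    {s₀ : Finset α} (h₀ : P s₀)
    (step : ∀ s x y, #s = #s₀ → x ∈ s → y ∉ s → P s → P (insert y (s.erase x)))
    {s : Finset α} (hs : #s = #s₀) : P s := by
  induction hm : #(s \ s₀) generalizing s with
  | zero =>
    rwa [eq_of_subset_of_card_le (sdiff_eq_empty_iff_subset.mp (card_eq_zero.mp hm)) hs.ge]
  | succ m ih =>
    obtain ⟨y, hy⟩ := card_pos.mp (hm ▸ m.succ_pos : 0 < #(s \ s₀))
    obtain ⟨x, hx⟩ : (s₀ \ s).Nonempty := by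
      rw [← card_pos]
      have := card_sdiff_add_card_inter s s₀
      have := card_sdiff_add_card_inter s₀ s
      rw [inter_comm] at this
      omega
    rw [mem_sdiff] at hx hy
    have hxy : x ≠ y := fun h => hy.2 (h ▸ hx.1)
    have hx' : x ∉ s.erase y := fun h => hx.2 (mem_of_mem_erase h)
    have hs' : #(insert x (s.erase y)) = #s₀ := by
      rw [card_insert_of_notMem hx', card_erase_of_mem hy.1, hs]
      have := card_pos.mpr ⟨x, hx.1⟩
      omega
    have ih' := ih hs' (by
      rw [insert_sdiff_of_mem _ hx.1, erase_sdiff_comm, card_erase_of_mem (mem_sdiff.mpr hy), hm,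
        Nat.add_sub_cancel])
    have := step _ x y hs' (mem_insert_self x _) (by simp [hxy.symm]) ih'
    rwa [erase_insert hx', insert_erase hy.1] at this

section PermDist

variable {n : ℕ}

theorem permDist_comm (φ ψ : Perm (Fin n)) : permDist φ ψ = permDist ψ φ :=
  hammingDist_comm ⇑φ ⇑ψ

theorem permDist_eq_zero {φ ψ : Perm (Fin n)} : permDist φ ψ = 0 ↔ φ = ψ :=
  hammingDist_eq_zero.trans DFunLike.coe_fn_eq

theorem permDist_eq_card_support (φ ψ : Perm (Fin n)) :
    permDist φ ψ = #(ψ⁻¹ * φ).support := by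
  unfold permDist
  congr 1
  ext i
  simp [Perm.inv_def, Equiv.eq_symm_apply, eq_comm]

theorem permDist_one_right (φ : Perm (Fin n)) : permDist φ 1 = #φ.support := by
  simp [permDist_eq_card_support]

theorem permDist_mul_left (σ φ ψ : Perm (Fin n)) :
    permDist (σ * φ) (σ * ψ) = permDist φ ψ := by
  simp [permDist_eq_card_support, mul_assoc]

theorem permDist_mul_right (τ φ ψ : Perm (Fin n)) :
    permDist (φ * τ) (ψ * τ) = permDist φ ψ := by
  rw [permDist_eq_card_support, permDist_eq_card_support,
    show (ψ * τ)⁻¹ * (φ * τ) = τ⁻¹ * (ψ⁻¹ * φ) * τ⁻¹⁻¹ by group, Perm.support_conj, card_map]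

theorem permDist_inv (φ ψ : Perm (Fin n)) : permDist φ⁻¹ ψ⁻¹ = permDist φ ψ := by
  rw [permDist_comm, permDist_eq_card_support, permDist_eq_card_support, inv_inv,
    show φ * ψ⁻¹ = φ * (ψ⁻¹ * φ) * φ⁻¹ by group, Perm.support_conj, card_map]

theorem permDist_of_disjoint {φ ψ : Perm (Fin n)} (h : Perm.Disjoint φ ψ) :
    permDist φ ψ = #φ.support + #ψ.support := by
  rw [permDist_eq_card_support, h.symm.inv_left.card_support_mul, Perm.support_inv, add_comm]

theorem card_sdiff_support_add_card_sdiff_support_le_permDist (φ ψ : Perm (Fin n)) :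
    #(φ.support \ ψ.support) + #(ψ.support \ φ.support) ≤ permDist φ ψ := by
  rw [← card_union_of_disjoint disjoint_sdiff_sdiff]
  refine card_le_card fun i hi => ?_
  simp only [mem_union, mem_sdiff, Perm.mem_support, not_not] at hi
  simp only [mem_filter, mem_univ, true_and]
  rcases hi with ⟨h, h'⟩ | ⟨h, h'⟩ <;> rw [h'] <;> tauto

theorem permDist_sub_permDist_one (φ : Perm (Fin n)) {χ : Perm (Fin n)} {S : Finset (Fin n)}
    (hχ : χ.support ⊆ S) :
    (permDist φ χ : ℤ) - permDist φ 1 =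
      ∑ i ∈ S, ((if φ i = χ i then 0 else 1) - if φ i = i then 0 else 1) := by
  have hsum : ∀ χ' : Perm (Fin n), (permDist φ χ' : ℤ) = ∑ i, if φ i = χ' i then 0 else 1 :=
    fun χ' => by rw [permDist, natCast_card_filter]; simp only [ite_not]
  rw [hsum, hsum, ← sum_sub_distrib]
  refine (sum_subset (subset_univ S) fun i _ hi => ?_).symm
  rw [Perm.notMem_support.mp (fun h => hi (hχ h)), Perm.one_apply, sub_self]

end PermDist

section Distances

variable {n : ℕ}

theorem permDist_swap_one {a b : Fin n} (hab : a ≠ b) : permDist (swap a b) 1 = 2 := by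
  rw [permDist_one_right, Perm.card_support_swap hab]

theorem permDist_swap_swap_of_ne {a b c : Fin n} (hab : a ≠ b) (hac : a ≠ c) (hbc : b ≠ c) :
    permDist (swap a b) (swap a c) = 3 := by
  rw [permDist_eq_card_support, swap_inv,
    (Perm.isThreeCycle_swap_mul_swap_same hac hab hbc.symm).card_support]

theorem permDist_swap_swap_of_disjoint {a b c d : Fin n} (hab : a ≠ b) (hcd : c ≠ d)
    (hac : a ≠ c) (had : a ≠ d) (hbc : b ≠ c) (hbd : b ≠ d) :
    permDist (swap a b) (swap c d) = 4 := by
  rw [permDist_of_disjoint, Perm.card_support_swap hab, Perm.card_support_swap hcd]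
  rw [Perm.disjoint_iff_disjoint_support, Perm.support_swap hab, Perm.support_swap hcd]
  simp [hac.symm, had.symm, hbc.symm, hbd.symm]

theorem permDist_threeCycle_swap (a b c : Fin n) (hbc : b ≠ c) :
    permDist (threeCycle a b c) (swap a b) = 2 := by
  rw [threeCycle, ← mul_one (swap a b), mul_assoc, permDist_mul_left, one_mul,
    permDist_swap_one hbc]

theorem permDist_threeCycle_threeCycle_same {u v x y : Fin n} (hvx : v ≠ x) (hvy : v ≠ y)
    (hxy : x ≠ y) : permDist (threeCycle u v x) (threeCycle u v y) = 3 := by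
  rw [threeCycle, threeCycle, permDist_mul_left, permDist_swap_swap_of_ne hvx hvy hxy]

theorem permDist_threeCycle_threeCycle_opp {u v x y : Fin n} (huv : u ≠ v) (hux : u ≠ x)
    (huy : u ≠ y) (hvx : v ≠ x) (hvy : v ≠ y) (hxy : x ≠ y) :
    permDist (threeCycle u v x) (threeCycle v u y) = 4 := by
  rw [threeCycle, threeCycle, swap_comm v u, permDist_mul_left,
    permDist_swap_swap_of_disjoint hvx huy huv.symm hvy hux.symm hxy]

theorem support_subset_of_permDist_eq_two {ρ t : Perm (Fin n)} (hρ : #ρ.support = 3)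
    (ht : #t.support = 2) (hd : permDist ρ t = 2) : t.support ⊆ ρ.support := by
  have key := card_sdiff_support_add_card_sdiff_support_le_permDist ρ t
  have h₁ := card_sdiff_add_card_inter ρ.support t.support
  have h₂ := card_sdiff_add_card_inter t.support ρ.support
  rw [inter_comm] at h₂
  rw [← sdiff_eq_empty_iff_subset, ← card_eq_zero]
  omega

theorem not_disjoint_support_of_permDist_eq_three {t t' : Perm (Fin n)} (ht : t.IsSwap)
    (ht' : t'.IsSwap) (hd : permDist t t' = 3) : ¬ Disjoint t.support t'.support := fun h => by
  rw [permDist_of_disjoint (Perm.disjoint_iff_disjoint_support.mpr h),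
    Perm.card_support_eq_two.mpr ht, Perm.card_support_eq_two.mpr ht'] at hd
  omega

end Distances

section Triangles

variable {n : ℕ}

/-- For transpositions this says that their supports lie in a common `3`-set. -/
def IsTriangle (t₁ t₂ t₃ : Perm (Fin n)) : Prop :=
  ∃ ρ : Perm (Fin n), #ρ.support = 3 ∧ permDist ρ t₁ = 2 ∧ permDist ρ t₂ = 2 ∧ permDist ρ t₃ = 2

theorem isTriangle_swap {a b c : Fin n} (hab : a ≠ b) (hac : a ≠ c) (hbc : b ≠ c) :
    IsTriangle (swap a b) (swap a c) (swap b c) := by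
  refine ⟨threeCycle a b c, card_support_threeCycle hab hac hbc,
    permDist_threeCycle_swap a b c hbc, ?_, ?_⟩
  · rw [threeCycle_rotate hab hac hbc, threeCycle_rotate hbc hab.symm hac.symm, swap_comm,
      permDist_threeCycle_swap c a b hab]
  · rw [threeCycle_rotate hab hac hbc, permDist_threeCycle_swap b c a hac.symm]

theorem not_isTriangle_swap {p q₁ q₂ q₃ : Fin n} (h₁ : p ≠ q₁) (h₂ : p ≠ q₂) (h₃ : p ≠ q₃)
    (h₁₂ : q₁ ≠ q₂) (h₁₃ : q₁ ≠ q₃) (h₂₃ : q₂ ≠ q₃) :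
    ¬ IsTriangle (swap p q₁) (swap p q₂) (swap p q₃) := by
  rintro ⟨ρ, hρ, hd₁, hd₂, hd₃⟩
  have hsub : ∀ q, p ≠ q → permDist ρ (swap p q) = 2 → {p, q} ⊆ ρ.support := fun q hpq hd =>
    Perm.support_swap hpq ▸ support_subset_of_permDist_eq_two hρ (Perm.card_support_swap hpq) hd
  have h4 : {p, q₁, q₂, q₃} ⊆ ρ.support := by
    have m₁ := hsub q₁ h₁ hd₁
    have m₂ := hsub q₂ h₂ hd₂
    have m₃ := hsub q₃ h₃ hd₃
    simp only [insert_subset_iff, singleton_subset_iff] at m₁ m₂ m₃ ⊢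
    exact ⟨m₁.1, m₁.2, m₂.2, m₃.2⟩
  have := card_le_card h4
  rw [hρ, card_insert_of_notMem (by simp [*]), card_insert_of_notMem (by simp [*]),
    card_pair h₂₃] at this
  omega

end Triangles

section Reconstruction

variable {n : ℕ}

theorem permDist_swap_sub_permDist_one (φ : Perm (Fin n)) {a b : Fin n} (hab : a ≠ b) :
    (permDist φ (swap a b) : ℤ) - permDist φ 1 =
      ((if φ a = b then 0 else 1) - if φ a = a then 0 else 1) +
        ((if φ b = a then 0 else 1) - if φ b = b then 0 else 1) := by
  rw [permDist_sub_permDist_one φ (Perm.support_swap hab).subset, sum_pair hab, swap_apply_left,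
    swap_apply_right]

theorem permDist_threeCycle_sub_permDist_one (φ : Perm (Fin n)) {a b c : Fin n} (hab : a ≠ b)
    (hac : a ≠ c) (hbc : b ≠ c) :
    (permDist φ (threeCycle a b c) : ℤ) - permDist φ 1 =
      ((if φ a = b then 0 else 1) - if φ a = a then 0 else 1) +
        (((if φ b = c then 0 else 1) - if φ b = b then 0 else 1) +
          ((if φ c = a then 0 else 1) - if φ c = c then 0 else 1)) := by
  rw [permDist_sub_permDist_one φ (support_threeCycle hab hac hbc).subset,
    sum_insert (by simp [hab, hac]), sum_pair hbc, threeCycle_apply_left hab hac,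
    threeCycle_apply_mid hac hbc, threeCycle_apply_right]

theorem apply_eq_self_iff_forall_permDist_lt (φ : Perm (Fin n)) (a : Fin n) :
    φ a = a ↔ ∀ b, b ≠ a → permDist φ 1 < permDist φ (swap a b) := by
  constructor
  · intro ha b hb
    have key := permDist_swap_sub_permDist_one φ hb.symm
    have hφb : φ b ≠ a := fun h => hb (φ.injective (h.trans ha.symm))
    rw [if_neg (ha.trans_ne hb.symm), if_pos ha, if_neg hφb] at key
    split_ifs at key <;> omega
  · intro h
    by_contra ha
    have key := permDist_swap_sub_permDist_one φ (Ne.symm ha)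
    have hφb : φ (φ a) ≠ φ a := fun h => ha (φ.injective h)
    have := h (φ a) ha
    rw [if_pos rfl, if_neg ha, if_neg hφb] at key
    split_ifs at key <;> omega

theorem apply_eq_self_iff_of_permDist_eq {φ ψ : Perm (Fin n)}
    (h : ∀ χ : Perm (Fin n), #χ.support ≤ 2 → permDist ψ χ = permDist φ χ) (x : Fin n) :
    ψ x = x ↔ φ x = x := by
  simp only [apply_eq_self_iff_forall_permDist_lt, h 1 (by simp)]
  refine forall₂_congr fun b hb => ?_
  rw [h (swap x b) (Perm.card_support_swap hb.symm).le]

theorem apply_eq_or_apply_apply_eq_of_permDist_eq {φ ψ : Perm (Fin n)}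
    (h : ∀ χ : Perm (Fin n), #χ.support ≤ 2 → permDist ψ χ = permDist φ χ) (x : Fin n) :
    ψ x = φ x ∨ φ (ψ x) = x := by
  by_cases hψx : ψ x = x
  · left
    rw [hψx, ((apply_eq_self_iff_of_permDist_eq h x).mp hψx)]
  by_contra! hne
  have hφy : φ (ψ x) ≠ ψ x := fun hy =>
    hψx (ψ.injective ((apply_eq_self_iff_of_permDist_eq h _).mpr hy))
  have hψy : ψ (ψ x) ≠ ψ x := fun hy => hψx (ψ.injective hy)
  have hφx : φ x ≠ x := fun hx => hψx ((apply_eq_self_iff_of_permDist_eq h x).mpr hx)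
  -- `swap x (ψ x)` is closer than `1` to `ψ`, but not to `φ`
  have key := permDist_swap_sub_permDist_one φ (Ne.symm hψx)
  have key' := permDist_swap_sub_permDist_one ψ (Ne.symm hψx)
  rw [h (swap x (ψ x)) (Perm.card_support_swap (Ne.symm hψx)).le, h 1 (by simp)] at key'
  rw [if_neg hne.1.symm, if_neg hφx, if_neg hne.2, if_neg hφy] at key
  rw [if_pos rfl, if_neg hψx, if_neg hψy] at key'
  split_ifs at key' <;> omega

theorem eq_of_forall_card_support_le_three_permDist_eq {φ ψ : Perm (Fin n)}
    (h : ∀ χ : Perm (Fin n), #χ.support ≤ 3 → permDist ψ χ = permDist φ χ) : ψ = φ := by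
  have h₂ : ∀ χ : Perm (Fin n), #χ.support ≤ 2 → permDist ψ χ = permDist φ χ :=
    fun χ hχ => h χ (by omega)
  have hfix := apply_eq_self_iff_of_permDist_eq h₂
  refine Equiv.ext fun x => ?_
  by_contra hne
  have hinv := (apply_eq_or_apply_apply_eq_of_permDist_eq h₂ x).resolve_left hne
  set y := φ x
  set z := φ y
  have hxy : x ≠ y := fun hx => hne (by rw [(hfix x).mpr hx.symm, ← hx])
  have hyz : y ≠ z := fun hy => hxy (φ.injective hy)
  have hxz : x ≠ z := fun hx => hne (φ.injective (hinv.trans hx))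
  have hψz : ψ z = x → φ z = x := fun hz =>
    ((apply_eq_or_apply_apply_eq_of_permDist_eq h₂ z).resolve_right
      (by rw [hz]; exact hyz)).symm.trans hz
  -- `φ` agrees with `threeCycle x y z` at `x` and `y`; `ψ` does not agree at `x`, and agrees at
  -- `z` only if `φ z = x`
  have key := permDist_threeCycle_sub_permDist_one φ hxy hxz hyz
  have key' := permDist_threeCycle_sub_permDist_one ψ hxy hxz hyz
  rw [h _ (card_support_threeCycle hxy hxz hyz).le, h 1 (by simp)] at key'
  have hφz : φ z ≠ z := fun hz => hyz (φ.injective hz).symm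
  rw [if_pos rfl, if_neg hxy.symm, if_pos rfl, if_neg hyz.symm, if_neg hφz] at key
  rw [if_neg hne, if_neg (mt (hfix x).mp hxy.symm), if_neg (mt (hfix y).mp hyz.symm),
    if_neg (mt (hfix z).mp hφz)] at key'
  by_cases hφzx : φ z = x
  · rw [if_pos hφzx] at key
    split_ifs at key' <;> omega
  · rw [if_neg hφzx] at key
    rw [if_neg (mt hψz hφzx)] at key'
    split_ifs at key' <;> omega

end Reconstruction

section Isometry

variable {n : ℕ}

def IsPermIsometry (f : Perm (Fin n) → Perm (Fin n)) : Prop :=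
  ∀ φ ψ, permDist (f φ) (f ψ) = permDist φ ψ

theorem isPermIsometry_mul_left (σ : Perm (Fin n)) : IsPermIsometry (σ * ·) :=
  permDist_mul_left σ

theorem isPermIsometry_mul_right (τ : Perm (Fin n)) : IsPermIsometry (· * τ) :=
  permDist_mul_right τ

theorem isPermIsometry_inv : IsPermIsometry (n := n) (·⁻¹) :=
  permDist_inv

namespace IsPermIsometry

variable {f g h : Perm (Fin n) → Perm (Fin n)}

theorem comp (hf : IsPermIsometry f) (hg : IsPermIsometry g) : IsPermIsometry (f ∘ g) :=
  fun φ ψ => (hf (g φ) (g ψ)).trans (hg φ ψ)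

theorem injective (hf : IsPermIsometry f) : Function.Injective f := fun φ ψ h =>
  permDist_eq_zero.mp (by rw [← hf, h, permDist_eq_zero])

theorem card_support (hf : IsPermIsometry f) (hf1 : f 1 = 1) (φ : Perm (Fin n)) :
    #(f φ).support = #φ.support := by
  rw [← permDist_one_right, ← permDist_one_right, ← hf φ 1, hf1]

theorem isSwap (hf : IsPermIsometry f) (hf1 : f 1 = 1) {t : Perm (Fin n)} (ht : t.IsSwap) :
    (f t).IsSwap := by
  rw [← Perm.card_support_eq_two, hf.card_support hf1, Perm.card_support_eq_two.mpr ht]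

theorem isTriangle_map (hf : IsPermIsometry f) (hf1 : f 1 = 1) {t₁ t₂ t₃ : Perm (Fin n)} :
    IsTriangle t₁ t₂ t₃ → IsTriangle (f t₁) (f t₂) (f t₃) := fun ⟨ρ, hρ, hd⟩ =>
  ⟨f ρ, (hf.card_support hf1 ρ).trans hρ, by simpa only [hf ρ] using hd⟩

theorem isTriangle_of_isTriangle_map (hf : IsPermIsometry f) (hf1 : f 1 = 1)
    (hsurj : Function.Surjective f) {t₁ t₂ t₃ : Perm (Fin n)} :
    IsTriangle (f t₁) (f t₂) (f t₃) → IsTriangle t₁ t₂ t₃ := fun ⟨ρ', hρ', hd⟩ => by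
  obtain ⟨ρ, rfl⟩ := hsurj ρ'
  exact ⟨ρ, hf.card_support hf1 ρ ▸ hρ', by simpa only [hf ρ] using hd⟩

theorem not_disjoint_support_map_swap (hf : IsPermIsometry f) (hf1 : f 1 = 1) {a b c : Fin n}
    (hb : b ≠ a) (hc : c ≠ a) (hbc : b ≠ c) :
    ¬ Disjoint (f (swap a b)).support (f (swap a c)).support :=
  not_disjoint_support_of_permDist_eq_three (hf.isSwap hf1 ⟨a, b, hb.symm, rfl⟩)
    (hf.isSwap hf1 ⟨a, c, hc.symm, rfl⟩)
    (by rw [hf]; exact permDist_swap_swap_of_ne hb.symm hc.symm hbc)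

/-- Otherwise the images of `swap a b₁`, `swap a b₂`, `swap a c` would form a triangle, while
the three transpositions themselves do not. -/
theorem mem_support_map_swap_of_mem_support (hf : IsPermIsometry f) (hf1 : f 1 = 1)
    (hsurj : Function.Surjective f) {a b₁ b₂ c p : Fin n} (hb₁ : b₁ ≠ a) (hb₂ : b₂ ≠ a)
    (hb₁₂ : b₁ ≠ b₂) (hc : c ≠ a) (hp₁ : p ∈ (f (swap a b₁)).support)
    (hp₂ : p ∈ (f (swap a b₂)).support) : p ∈ (f (swap a c)).support := by
  by_contra hpc
  have hcb₁ : c ≠ b₁ := by rintro rfl; exact hpc hp₁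
  have hcb₂ : c ≠ b₂ := by rintro rfl; exact hpc hp₂
  have hq : ∀ b, b ≠ a → c ≠ b → p ∈ (f (swap a b)).support →
      ∃ q, p ≠ q ∧ f (swap a b) = swap p q ∧ q ∈ (f (swap a c)).support := fun b hb hcb hp => by
    obtain ⟨q, hpq, e⟩ := (hf.isSwap hf1 ⟨a, b, hb.symm, rfl⟩).exists_eq_swap_of_mem_support hp
    obtain ⟨x, hx, hx'⟩ := not_disjoint_iff.mp (hf.not_disjoint_support_map_swap hf1 hc hb hcb)
    rw [e, Perm.support_swap hpq, mem_insert, mem_singleton] at hx'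
    rcases hx' with rfl | rfl
    · exact absurd hx hpc
    · exact ⟨x, hpq, e, hx⟩
  obtain ⟨q₁, hpq₁, e₁, hq₁⟩ := hq b₁ hb₁ hcb₁ hp₁
  obtain ⟨q₂, hpq₂, e₂, hq₂⟩ := hq b₂ hb₂ hcb₂ hp₂
  have hq₁₂ : q₁ ≠ q₂ := by
    rintro rfl
    simpa using hb₁₂ (by simpa using DFunLike.congr_fun (hf.injective (e₁.trans e₂.symm)) a)
  have e₃ : f (swap a c) = swap q₁ q₂ :=
    (hf.isSwap hf1 ⟨a, c, hc.symm, rfl⟩).eq_swap_of_mem_support hq₁ hq₂ hq₁₂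
  have htri := isTriangle_swap hpq₁ hpq₂ hq₁₂
  rw [← e₁, ← e₂, ← e₃] at htri
  exact not_isTriangle_swap hb₁.symm hb₂.symm hc.symm hb₁₂ hcb₁.symm hcb₂.symm
    (hf.isTriangle_of_isTriangle_map hf1 hsurj htri)

theorem exists_mem_support_map_swap (hf : IsPermIsometry f) (hf1 : f 1 = 1)
    (hsurj : Function.Surjective f) (hn : 3 ≤ n) (a : Fin n) :
    ∃ p, ∀ b, b ≠ a → p ∈ (f (swap a b)).support := by
  have hcard : 2 < Fintype.card (Fin n) := by rw [Fintype.card_fin]; omega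
  obtain ⟨b₁, hb₁, -⟩ := exists_ne_and_ne hcard a a
  obtain ⟨b₂, hb₂, hb₂₁⟩ := exists_ne_and_ne hcard a b₁
  obtain ⟨p, hp₁, hp₂⟩ :=
    not_disjoint_iff.mp (hf.not_disjoint_support_map_swap hf1 hb₁ hb₂ (Ne.symm hb₂₁))
  exact ⟨p, fun c hc =>
    hf.mem_support_map_swap_of_mem_support hf1 hsurj hb₁ hb₂ (Ne.symm hb₂₁) hc hp₁ hp₂⟩

/-- Otherwise the images of the triangle `swap a a'`, `swap a c`, `swap a' c` would be three
transpositions through the common point `s a = s a'`. -/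
theorem injective_of_mem_support_map_swap (hf : IsPermIsometry f) (hf1 : f 1 = 1) (hn : 3 ≤ n)
    {s : Fin n → Fin n} (hs : ∀ a b, b ≠ a → s a ∈ (f (swap a b)).support) :
    Function.Injective s := by
  intro a a' hsa
  by_contra hne
  obtain ⟨c, hca, hca'⟩ := exists_ne_and_ne (by rw [Fintype.card_fin]; omega) a a'
  have hswap : ∀ x y, x ≠ y → (f (swap x y)).IsSwap := fun x y h => hf.isSwap hf1 ⟨x, y, h, rfl⟩
  obtain ⟨q₁, hpq₁, e₁⟩ := (hswap a a' hne).exists_eq_swap_of_mem_support (hs a a' (Ne.symm hne))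
  obtain ⟨q₂, hpq₂, e₂⟩ := (hswap a c hca.symm).exists_eq_swap_of_mem_support (hs a c hca)
  obtain ⟨q₃, hpq₃, e₃⟩ := (hswap a' c hca'.symm).exists_eq_swap_of_mem_support
    (hsa ▸ hs a' c hca')
  have hq : ∀ {t t' q q'}, f t = swap (s a) q → f t' = swap (s a) q' → permDist t t' = 3 →
      q ≠ q' := by
    rintro t t' q q' e e' hd rfl
    have := hf t t'
    rw [e, e', permDist_eq_zero.mpr rfl, hd] at this
    omega
  have hq₁₂ := hq e₁ e₂ (permDist_swap_swap_of_ne hne hca.symm hca'.symm)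
  have hq₁₃ := hq e₁ e₃ (by
    rw [swap_comm a a']; exact permDist_swap_swap_of_ne (Ne.symm hne) hca'.symm hca.symm)
  have hq₂₃ := hq e₂ e₃ (by
    rw [swap_comm a c, swap_comm a' c]; exact permDist_swap_swap_of_ne hca hca' hne)
  have htri := hf.isTriangle_map hf1 (isTriangle_swap hne hca.symm hca'.symm)
  rw [e₁, e₂, e₃] at htri
  exact not_isTriangle_swap hpq₁ hpq₂ hpq₃ hq₁₂ hq₁₃ hq₂₃ htri

theorem exists_map_swap_eq_swap (hf : IsPermIsometry f) (hf1 : f 1 = 1)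
    (hsurj : Function.Surjective f) (hn : 3 ≤ n) :
    ∃ σ : Perm (Fin n), ∀ a b, a ≠ b → f (swap a b) = swap (σ a) (σ b) := by
  choose s hs using hf.exists_mem_support_map_swap hf1 hsurj hn
  have hinj := hf.injective_of_mem_support_map_swap hf1 hn hs
  refine ⟨Equiv.ofBijective s (Finite.injective_iff_bijective.mp hinj), fun a b hab => ?_⟩
  exact (hf.isSwap hf1 ⟨a, b, hab, rfl⟩).eq_swap_of_mem_support (hs a b hab.symm)
    (swap_comm a b ▸ hs b a hab) (hinj.ne hab)

theorem permDist_map_eq_of_forall_map_eq_self {k : ℕ} (hh : IsPermIsometry h)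
    (hfix : ∀ χ : Perm (Fin n), #χ.support ≤ k → h χ = χ) (φ : Perm (Fin n)) :
    ∀ χ : Perm (Fin n), #χ.support ≤ k → permDist (h φ) χ = permDist φ χ := fun χ hχ => by
  conv_lhs => rw [← hfix χ hχ]
  exact hh φ χ

theorem eq_id_of_forall_card_support_le_three (hh : IsPermIsometry h)
    (hfix : ∀ χ : Perm (Fin n), #χ.support ≤ 3 → h χ = χ) (φ : Perm (Fin n)) : h φ = φ :=
  eq_of_forall_card_support_le_three_permDist_eq (hh.permDist_map_eq_of_forall_map_eq_self hfix φ)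

theorem map_eq_or_map_eq_inv_of_card_support_eq_three (hh : IsPermIsometry h)
    (hfix : ∀ χ : Perm (Fin n), #χ.support ≤ 2 → h χ = χ) {ρ : Perm (Fin n)}
    (hρ : #ρ.support = 3) : h ρ = ρ ∨ h ρ = ρ⁻¹ := by
  obtain ⟨a, b, c, hab, hac, hbc, hS⟩ := card_eq_three.mp hρ
  have hS' : (h ρ).support = {a, b, c} := by
    ext x
    rw [← hS, Perm.mem_support, Perm.mem_support, ne_eq, ne_eq,
      apply_eq_self_iff_of_permDist_eq (hh.permDist_map_eq_of_forall_map_eq_self hfix ρ)]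
  rcases eq_threeCycle_or_eq_threeCycle_of_support_eq hab hac hbc hS with rfl | rfl <;>
    rcases eq_threeCycle_or_eq_threeCycle_of_support_eq hab hac hbc hS' with e | e <;>
    simp [e, threeCycle_inv]

theorem map_threeCycle_eq_of_map_threeCycle_eq (hh : IsPermIsometry h)
    (hfix : ∀ χ : Perm (Fin n), #χ.support ≤ 2 → h χ = χ) {u v x y : Fin n} (huv : u ≠ v)
    (hux : u ≠ x) (huy : u ≠ y) (hvx : v ≠ x) (hvy : v ≠ y) (hxy : x ≠ y)
    (hx : h (threeCycle u v x) = threeCycle u v x) : h (threeCycle u v y) = threeCycle u v y := by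
  refine (hh.map_eq_or_map_eq_inv_of_card_support_eq_three hfix
    (card_support_threeCycle huv huy hvy)).resolve_right fun hy => ?_
  have := hh (threeCycle u v x) (threeCycle u v y)
  rw [hx, hy, threeCycle_inv, threeCycle_rotate hvy.symm huy.symm huv.symm,
    permDist_threeCycle_threeCycle_opp huv hux huy hvx hvy hxy,
    permDist_threeCycle_threeCycle_same hvx hvy hxy] at this
  omega

theorem map_eq_self_of_support_eq (hh : IsPermIsometry h)
    (hfix : ∀ χ : Perm (Fin n), #χ.support ≤ 2 → h χ = χ) {a b c : Fin n} (hab : a ≠ b)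
    (hac : a ≠ c) (hbc : b ≠ c) (hbase : h (threeCycle a b c) = threeCycle a b c)
    {ρ : Perm (Fin n)} (hρ : ρ.support = {a, b, c}) : h ρ = ρ := by
  rcases eq_threeCycle_or_eq_threeCycle_of_support_eq hab hac hbc hρ with rfl | rfl
  · exact hbase
  refine (hh.map_eq_or_map_eq_inv_of_card_support_eq_three hfix
    (card_support_threeCycle hbc.symm hac.symm hab.symm)).resolve_right fun e => ?_
  rw [threeCycle_inv] at e
  have e' := DFunLike.congr_fun (hh.injective (e.trans hbase.symm)) c
  rw [threeCycle_apply_left hbc.symm hac.symm, threeCycle_apply_right] at e'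
  exact hab e'.symm

theorem map_eq_self_of_support_eq_of_exchange (hh : IsPermIsometry h)
    (hfix : ∀ χ : Perm (Fin n), #χ.support ≤ 2 → h χ = χ) {x y u v : Fin n} (huv : u ≠ v)
    (hux : u ≠ x) (huy : u ≠ y) (hvx : v ≠ x) (hvy : v ≠ y) (hxy : x ≠ y)
    (hx : ∀ ρ : Perm (Fin n), ρ.support = {x, u, v} → h ρ = ρ) {ρ : Perm (Fin n)}
    (hρ : ρ.support = {y, u, v}) : h ρ = ρ := by
  have hfix₃ : ∀ p q, {p, q} = ({u, v} : Finset (Fin n)) → p ≠ q → p ≠ x → q ≠ x →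
      h (threeCycle p q x) = threeCycle p q x := fun p q e hpq hpx hqx =>
    hx _ ((support_threeCycle hpq hpx hqx).trans (by rw [← e]; ext; simp; tauto))
  rcases eq_threeCycle_or_eq_threeCycle_of_support_eq huv huy hvy
    (hρ.trans (by ext; simp; tauto)) with rfl | rfl
  · exact hh.map_threeCycle_eq_of_map_threeCycle_eq hfix huv hux huy hvx hvy hxy
      (hfix₃ u v rfl huv hux hvx)
  · rw [threeCycle_rotate hvy.symm huy.symm huv.symm]
    exact hh.map_threeCycle_eq_of_map_threeCycle_eq hfix huv.symm hvx hvy hux huy hxy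
      (hfix₃ v u (pair_comm v u) huv.symm hvx hux)

theorem map_eq_self_of_card_support_eq_three (hh : IsPermIsometry h)
    (hfix : ∀ χ : Perm (Fin n), #χ.support ≤ 2 → h χ = χ) {a b c : Fin n} (hab : a ≠ b)
    (hac : a ≠ c) (hbc : b ≠ c) (hbase : h (threeCycle a b c) = threeCycle a b c)
    {ρ : Perm (Fin n)} (hρ : #ρ.support = 3) : h ρ = ρ := by
  have hcard : #({a, b, c} : Finset (Fin n)) = 3 := by
    rw [← support_threeCycle hab hac hbc, card_support_threeCycle hab hac hbc]
  refine Finset.induction_on_exchange (P := fun S => ∀ ρ : Perm (Fin n), ρ.support = S → h ρ = ρ)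
    (fun ρ => hh.map_eq_self_of_support_eq hfix hab hac hbc hbase)
    (fun s x y hs hx hy hs' ρ' hρ' => ?_) (hρ.trans hcard.symm) ρ rfl
  obtain ⟨u, v, huv, hsx⟩ := card_eq_two.mp (by rw [card_erase_of_mem hx, hs, hcard])
  have hxuv : x ∉ ({u, v} : Finset _) := hsx ▸ notMem_erase x s
  rw [← insert_erase hx, hsx] at hy hs'
  rw [hsx] at hρ'
  simp only [mem_insert, mem_singleton, not_or] at hxuv hy
  exact hh.map_eq_self_of_support_eq_of_exchange hfix huv (Ne.symm hxuv.1) (Ne.symm hy.2.1)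
    (Ne.symm hxuv.2) (Ne.symm hy.2.2) (Ne.symm hy.1) hs' hρ'

theorem eq_id_of_map_threeCycle_eq (hh : IsPermIsometry h)
    (hfix : ∀ χ : Perm (Fin n), #χ.support ≤ 2 → h χ = χ) {a b c : Fin n} (hab : a ≠ b)
    (hac : a ≠ c) (hbc : b ≠ c) (hbase : h (threeCycle a b c) = threeCycle a b c)
    (φ : Perm (Fin n)) : h φ = φ :=
  hh.eq_id_of_forall_card_support_le_three (fun χ hχ => (Nat.lt_or_eq_of_le hχ).elim
    (fun hχ => hfix χ (Nat.le_of_lt_succ hχ))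
    (hh.map_eq_self_of_card_support_eq_three hfix hab hac hbc hbase)) φ

theorem eq_id_or_eq_inv (hh : IsPermIsometry h)
    (hfix : ∀ χ : Perm (Fin n), #χ.support ≤ 2 → h χ = χ) (hn : 3 ≤ n) :
    (∀ φ, h φ = φ) ∨ (∀ φ, h φ = φ⁻¹) := by
  obtain ⟨a, b, c, hab, hac, hbc⟩ := Fintype.two_lt_card_iff.mp
    (by rw [Fintype.card_fin]; omega : 2 < Fintype.card (Fin n))
  rcases hh.map_eq_or_map_eq_inv_of_card_support_eq_three hfix
    (card_support_threeCycle hab hac hbc) with e | e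
  · exact Or.inl (hh.eq_id_of_map_threeCycle_eq hfix hab hac hbc e)
  have hfix' : ∀ χ : Perm (Fin n), #χ.support ≤ 2 → (h χ)⁻¹ = χ := fun χ hχ => by
    rw [hfix χ hχ]
    rcases Perm.eq_one_or_isSwap_of_card_support_le_two hχ with rfl | ⟨x, y, -, rfl⟩
    · exact inv_one
    · exact swap_inv x y
  exact Or.inr fun φ => inv_eq_iff_eq_inv.mp ((isPermIsometry_inv.comp hh).eq_id_of_map_threeCycle_eq
    hfix' hab hac hbc (by simp [e]) φ)

theorem exists_eq_mul_mul_or_eq_mul_inv_mul (hf : IsPermIsometry f)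
    (hsurj : Function.Surjective f) (hn : 3 ≤ n) :
    ∃ σ τ : Perm (Fin n), (∀ φ, f φ = σ * φ * τ) ∨ (∀ φ, f φ = σ * φ⁻¹ * τ) := by
  set g := fun φ => (f 1)⁻¹ * f φ
  have hg : IsPermIsometry g := (isPermIsometry_mul_left _).comp hf
  have hg1 : g 1 = 1 := inv_mul_cancel _
  obtain ⟨σ, hσ⟩ := hg.exists_map_swap_eq_swap hg1
    ((Equiv.mulLeft (f 1)⁻¹).surjective.comp hsurj) hn
  set h := fun φ => σ⁻¹ * g φ * σ
  have hh : IsPermIsometry h :=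
    ((isPermIsometry_mul_right σ).comp (isPermIsometry_mul_left σ⁻¹)).comp hg
  have hfix : ∀ χ : Perm (Fin n), #χ.support ≤ 2 → h χ = χ := fun χ hχ => by
    rcases Perm.eq_one_or_isSwap_of_card_support_le_two hχ with rfl | ⟨a, b, hab, rfl⟩
    · simp [h, hg1]
    · simp only [h, hσ a b hab, swap_apply_apply]
      group
  have hf_eq : ∀ φ, f φ = f 1 * σ * h φ * σ⁻¹ := fun φ => by
    simp only [h, g]
    group
  rcases hh.eq_id_or_eq_inv hfix hn with e | e
  · exact ⟨f 1 * σ, σ⁻¹, Or.inl fun φ => by rw [hf_eq, e]⟩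
  · exact ⟨f 1 * σ, σ⁻¹, Or.inr fun φ => by rw [hf_eq, e]⟩

end IsPermIsometry

end Isometry

section Counting

variable {G : Type*} [Group G]

theorem eq_and_eq_of_forall_mul_mul_eq (hZ : ∀ z : G, (∀ g, z * g = g * z) → z = 1)
    {a b a' b' : G} (h : ∀ g, a * g * b = a' * g * b') : a = a' ∧ b = b' := by
  have h₁ : a * b = a' * b' := by simpa using h 1
  have hz : a'⁻¹ * a = 1 := hZ _ fun g => calc
    a'⁻¹ * a * g = a'⁻¹ * (a * g * b) * (a * b)⁻¹ * a := by group
    _ = g * (a'⁻¹ * a) := by rw [h g, h₁]; group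
  obtain rfl := (inv_mul_eq_one.mp hz).symm
  exact ⟨rfl, mul_left_cancel h₁⟩

theorem not_forall_mul_mul_eq_mul_inv_mul [Nontrivial G]
    (hZ : ∀ z : G, (∀ g, z * g = g * z) → z = 1) (a b a' b' : G) :
    ¬ ∀ g, a * g * b = a' * g⁻¹ * b' := by
  intro h
  have h₁ : a * b = a' * b' := by simpa using h 1
  -- conjugation by `a'⁻¹ * a` is inversion, so `G` is commutative
  have hz : ∀ g, a'⁻¹ * a * g = g⁻¹ * (a'⁻¹ * a) := fun g => calc
    a'⁻¹ * a * g = a'⁻¹ * (a * g * b) * (a * b)⁻¹ * a := by group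
    _ = g⁻¹ * (a'⁻¹ * a) := by rw [h g, h₁]; group
  have hcomm : ∀ g k : G, g * k = k * g := fun g k => by
    have := calc (g⁻¹ * k⁻¹)⁻¹ * (a'⁻¹ * a) = a'⁻¹ * a * (g⁻¹ * k⁻¹) := (hz _).symm
      _ = a'⁻¹ * a * g⁻¹ * k⁻¹ := by group
      _ = g * (a'⁻¹ * a * k⁻¹) := by rw [hz]; group
      _ = g * k * (a'⁻¹ * a) := by rw [hz]; group
    simpa using (mul_right_cancel this).symm
  obtain ⟨x, hx⟩ := exists_ne (1 : G)
  exact hx (hZ x fun g => hcomm x g)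

variable {n : ℕ}

def standardIsometry (b : Bool) (σ τ : Perm (Fin n)) : Perm (Fin n) ≃ Perm (Fin n) :=
  ((bif b then Equiv.inv _ else Equiv.refl _).trans (Equiv.mulLeft σ)).trans (Equiv.mulRight τ)

theorem standardIsometry_apply (b : Bool) (σ τ φ : Perm (Fin n)) :
    standardIsometry b σ τ φ = σ * (bif b then φ⁻¹ else φ) * τ := by
  cases b <;> rfl

theorem isPermIsometry_standardIsometry (b : Bool) (σ τ : Perm (Fin n)) :
    IsPermIsometry (standardIsometry b σ τ) := by
  intro φ ψ
  cases b <;>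
    simp only [standardIsometry_apply, cond_false, cond_true, permDist_mul_right,
      permDist_mul_left, permDist_inv]

theorem standardIsometry_injective (hn : 3 ≤ n) :
    Function.Injective fun x : Bool × Perm (Fin n) × Perm (Fin n) =>
      standardIsometry x.1 x.2.1 x.2.2 := by
  have : Nontrivial (Fin n) := Fin.nontrivial_iff_two_le.mpr (by omega)
  have hZ : ∀ z : Perm (Fin n), (∀ g, z * g = g * z) → z = 1 := fun _ =>
    Perm.eq_one_of_forall_mul_comm (by rw [Fintype.card_fin]; omega)
  rintro ⟨b, σ, τ⟩ ⟨b', σ', τ'⟩ he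
  have happ := fun φ => DFunLike.congr_fun he φ
  simp only [standardIsometry_apply] at happ
  cases b <;> cases b' <;> simp only [cond_false, cond_true] at happ
  · obtain ⟨rfl, rfl⟩ := eq_and_eq_of_forall_mul_mul_eq hZ happ
    rfl
  · exact absurd happ (not_forall_mul_mul_eq_mul_inv_mul hZ _ _ _ _)
  · exact absurd (fun φ => (happ φ).symm) (not_forall_mul_mul_eq_mul_inv_mul hZ _ _ _ _)
  · obtain ⟨rfl, rfl⟩ := eq_and_eq_of_forall_mul_mul_eq hZ fun φ => by simpa using happ φ⁻¹
    rfl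

theorem card_isometries (hn : 3 ≤ n) :
    Nat.card {f : Perm (Fin n) ≃ Perm (Fin n) // ∀ φ ψ, permDist (f φ) (f ψ) = permDist φ ψ} =
      2 * n.factorial ^ 2 := by
  let F : Bool × Perm (Fin n) × Perm (Fin n) → {f : Perm (Fin n) ≃ Perm (Fin n) //
      ∀ φ ψ, permDist (f φ) (f ψ) = permDist φ ψ} := fun x =>
    ⟨standardIsometry x.1 x.2.1 x.2.2, isPermIsometry_standardIsometry _ _ _⟩
  have hF : Function.Bijective F := by
    refine ⟨fun x y he => standardIsometry_injective hn (congrArg Subtype.val he), ?_⟩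
    rintro ⟨f, hf⟩
    obtain ⟨σ, τ, e | e⟩ := IsPermIsometry.exists_eq_mul_mul_or_eq_mul_inv_mul hf f.surjective hn
    · exact ⟨(false, σ, τ), Subtype.ext (Equiv.ext fun φ => (e φ).symm)⟩
    · exact ⟨(true, σ, τ), Subtype.ext (Equiv.ext fun φ => (e φ).symm)⟩
  rw [← Nat.card_eq_of_bijective F hF, Nat.card_prod, Nat.card_prod]
  simp only [Nat.card_eq_fintype_card, Fintype.card_bool, Fintype.card_perm, Fintype.card_fin]
  ring

end Counting

/-- For `n ≥ 3`, every bijection of `Sym(n)` preserving Hamming distance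
has the form `φ ↦ σφτ` or `φ ↦ σφ⁻¹τ`; consequently the group of Hamming
isometries of `Sym(n)` has order `2·(n!)²`. -/
theorem isometries_of_symmetric_group (n : ℕ) (hn : 3 ≤ n) :
    (∀ f : Equiv.Perm (Fin n) → Equiv.Perm (Fin n), Function.Bijective f →
      (∀ φ ψ, permDist (f φ) (f ψ) = permDist φ ψ) →
      ∃ σ τ : Equiv.Perm (Fin n),
        (∀ φ, f φ = σ * φ * τ) ∨ (∀ φ, f φ = σ * φ⁻¹ * τ)) ∧
    Nat.card {f : Equiv.Perm (Fin n) ≃ Equiv.Perm (Fin n) //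
        ∀ φ ψ, permDist (f φ) (f ψ) = permDist φ ψ} = 2 * (Nat.factorial n) ^ 2 :=
  ⟨fun _ hbij hf => IsPermIsometry.exists_eq_mul_mul_or_eq_mul_inv_mul hf hbij.2 hn,
    card_isometries hn⟩
end

section
/- Let Γ be a nonempty subset of Sym(n) and let R_Γ be the matrix indexed by Sym(n) × Sym(n) with entries R_Γ(φ,ψ) = (1/|Π|) · |{t ∈ Π : φ ∈ t(Γ) and ψ ∈ t(Γ)}|. Then R_Γ is a real symmetric positive semidefinite matrix, its trace equals |Γ|, and its (id,id)-entry equals 1. -/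
/-!
Encode the isometries `t ∈ Π` and the elements of their images `t(Γ)` in a 0/1 incidence
matrix `A` with rows indexed by triples and columns by permutations. Then `|Π| • R_Γ = Aᵀ A`
is a Gram matrix, hence symmetric positive semidefinite, and its trace counts the pairs
`(t, φ)` with `t ∈ Π`, `φ ∈ t(Γ)`; each isometry is injective, so there are `|Π| · |Γ|` of them.
-/

/-- The isometry of `Sym(n)` associated to a triple `(σ,τ,ε)`:
`φ ↦ σφτ` when `ε = false` and `φ ↦ σφ⁻¹τ` when `ε = true`. -/
def isoAct {n : ℕ} (t : Equiv.Perm (Fin n) × Equiv.Perm (Fin n) × Bool)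
    (φ : Equiv.Perm (Fin n)) : Equiv.Perm (Fin n) :=
  if t.2.2 = false then t.1 * φ * t.2.1 else t.1 * φ⁻¹ * t.2.1

/-- The set `Π` of isometries `t` with `id ∈ t(Γ)`. -/
def PiSet {n : ℕ} (Γ : Set (Equiv.Perm (Fin n))) :
    Set (Equiv.Perm (Fin n) × Equiv.Perm (Fin n) × Bool) :=
  {t | ∃ φ ∈ Γ, isoAct t φ = 1}

/-- The matrix `R_Γ`, with `(φ,ψ)`-entry
`(1/|Π|)·|{t ∈ Π : φ ∈ t(Γ) and ψ ∈ t(Γ)}|`. -/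
noncomputable def Rmat {n : ℕ} (Γ : Set (Equiv.Perm (Fin n))) :
    Matrix (Equiv.Perm (Fin n)) (Equiv.Perm (Fin n)) ℝ :=
  fun φ ψ =>
    ({t | t ∈ PiSet Γ ∧ (∃ θ ∈ Γ, isoAct t θ = φ) ∧ (∃ θ ∈ Γ, isoAct t θ = ψ)}.ncard : ℝ) /
      ((PiSet Γ).ncard : ℝ)

section IncidenceMatrix

open Matrix

variable {ι α : Type*}

open Classical in
noncomputable def incidenceMatrix (P : Set ι) (s : ι → Set α) : Matrix ι α ℝ :=
  Matrix.of fun i a => if i ∈ P ∧ a ∈ s i then 1 else 0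

variable [Fintype ι] (P : Set ι) (s : ι → Set α)

theorem transpose_mul_incidenceMatrix_apply (a b : α) :
    ((incidenceMatrix P s)ᵀ * incidenceMatrix P s) a b =
      ({i | i ∈ P ∧ a ∈ s i ∧ b ∈ s i}.ncard : ℝ) := by
  classical
  simp only [incidenceMatrix, mul_apply, transpose_apply, of_apply, ite_zero_mul_ite_zero,
    mul_one, Finset.sum_boole, Set.ncard_eq_toFinset_card', Set.toFinset_ofPred, ← and_and_left]

theorem trace_transpose_mul_incidenceMatrix [Fintype α] {k : ℕ}
    (hk : ∀ i ∈ P, (s i).ncard = k) :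
    ((incidenceMatrix P s)ᵀ * incidenceMatrix P s).trace = (P.ncard * k : ℝ) := by
  classical
  have entry_sq (i : ι) (a : α) :
      incidenceMatrix P s i a * incidenceMatrix P s i a = incidenceMatrix P s i a := by
    simp only [incidenceMatrix, of_apply]
    split_ifs <;> norm_num
  have row_sum (i : ι) : ∑ a, incidenceMatrix P s i a = if i ∈ P then (k : ℝ) else 0 := by
    by_cases hi : i ∈ P
    · simp only [incidenceMatrix, of_apply, hi, true_and, if_true, Finset.sum_boole, ← hk i hi,
        Set.ncard_eq_toFinset_card', Set.filter_mem_univ_eq_toFinset]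
    · simp [incidenceMatrix, hi]
  calc ((incidenceMatrix P s)ᵀ * incidenceMatrix P s).trace
      = ∑ i, ∑ a, incidenceMatrix P s i a := by
        simp only [trace, diag_apply, mul_apply, transpose_apply, entry_sq]
        exact Finset.sum_comm
    _ = (P.ncard * k : ℝ) := by
        simp only [row_sum, ← Finset.sum_filter, Finset.sum_const, nsmul_eq_mul,
          Set.ncard_eq_toFinset_card', Set.filter_mem_univ_eq_toFinset]

end IncidenceMatrix

theorem isoAct_injective {n : ℕ} (t : Equiv.Perm (Fin n) × Equiv.Perm (Fin n) × Bool) :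
    Function.Injective (isoAct t) := by
  intro φ ψ h
  unfold isoAct at h
  split_ifs at h
  · exact mul_left_cancel (mul_right_cancel h)
  · exact inv_injective (mul_left_cancel (mul_right_cancel h))

theorem PiSet_ncard_ne_zero {n : ℕ} {Γ : Set (Equiv.Perm (Fin n))} (hΓ : Γ.Nonempty) :
    ((PiSet Γ).ncard : ℝ) ≠ 0 := by
  obtain ⟨φ, hφ⟩ := hΓ
  have hPi : (PiSet Γ).Nonempty := ⟨(φ⁻¹, 1, false), φ, hφ, by simp [isoAct]⟩
  exact_mod_cast (hPi.ncard_pos (Set.toFinite _)).ne'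

open Matrix in
theorem Rmat_eq_smul_transpose_mul_incidenceMatrix {n : ℕ} (Γ : Set (Equiv.Perm (Fin n))) :
    Rmat Γ = ((PiSet Γ).ncard : ℝ)⁻¹ •
      ((incidenceMatrix (PiSet Γ) fun t => isoAct t '' Γ)ᵀ *
        incidenceMatrix (PiSet Γ) fun t => isoAct t '' Γ) := by
  ext φ ψ
  rw [Matrix.smul_apply, transpose_mul_incidenceMatrix_apply, smul_eq_mul, inv_mul_eq_div]
  rfl

theorem Rmat_one_one {n : ℕ} {Γ : Set (Equiv.Perm (Fin n))} (hΓ : Γ.Nonempty) :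
    Rmat Γ 1 1 = 1 := by
  simp only [Rmat, PiSet, Set.mem_ofPred_eq, and_self]
  exact div_self (PiSet_ncard_ne_zero hΓ)

/-- For a nonempty `Γ ⊆ Sym(n)`, the matrix `R_Γ` is a real symmetric positive
semidefinite matrix, its trace equals `|Γ|`, and its `(id,id)` entry is `1`. -/
theorem Rmat_symm_posSemidef_trace_diag (n : ℕ)
    (Γ : Set (Equiv.Perm (Fin n))) (hΓ : Γ.Nonempty) :
    (Rmat Γ).IsSymm ∧ (Rmat Γ).PosSemidef ∧
      (Rmat Γ).trace = (Γ.ncard : ℝ) ∧ Rmat Γ 1 1 = 1 := by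
  have hpsd : (Rmat Γ).PosSemidef := by
    rw [Rmat_eq_smul_transpose_mul_incidenceMatrix, ← Matrix.conjTranspose_eq_transpose_of_trivial]
    exact (Matrix.posSemidef_conjTranspose_mul_self _).smul (by positivity)
  have htrace : (Rmat Γ).trace = (Γ.ncard : ℝ) := by
    rw [Rmat_eq_smul_transpose_mul_incidenceMatrix, Matrix.trace_smul,
      trace_transpose_mul_incidenceMatrix _ _
        fun t _ => Set.ncard_image_of_injective Γ (isoAct_injective t),
      smul_eq_mul, inv_mul_cancel_left₀ (PiSet_ncard_ne_zero hΓ)]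
  exact ⟨Matrix.isHermitian_iff_isSymm.mp hpsd.isHermitian, hpsd, htrace, Rmat_one_one hΓ⟩
end

section
/- Let Γ be a nonempty proper subset of Sym(n) and let φ, ψ ∈ Sym(n). If no quotient of two elements of Γ is conjugate to φψ⁻¹ (i.e., for all θ, μ ∈ Γ, the permutation θμ⁻¹ is not conjugate to φψ⁻¹ in Sym(n)), then R_Γ(φ,ψ) = 0 and R'_Γ(φ,ψ) = 0. -/
/-- The matrix `R'_Γ`, with `(φ,ψ)`-entry
`(1/|Π'|)·|{t ∈ Π' : φ ∈ t(Γ) and ψ ∈ t(Γ)}|`, where `Π'` is the complement of `Π`. -/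
noncomputable def Rmat' {n : ℕ} (Γ : Set (Equiv.Perm (Fin n))) :
    Matrix (Equiv.Perm (Fin n)) (Equiv.Perm (Fin n)) ℝ :=
  fun φ ψ =>
    ({t | t ∈ (PiSet Γ)ᶜ ∧ (∃ θ ∈ Γ, isoAct t θ = φ) ∧ (∃ θ ∈ Γ, isoAct t θ = ψ)}.ncard : ℝ) /
      (((PiSet Γ)ᶜ : Set _).ncard : ℝ)

/-!
An isometry `t` sends `θ, μ` to `σθτ, σμτ` or to `σθ⁻¹τ, σμ⁻¹τ`, and the quotient of the images
is conjugate by `σ` to `θμ⁻¹` or to `θ⁻¹μ ~ μθ⁻¹`. So under the hypothesis no isometry sends two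
elements of `Γ` onto `φ` and `ψ`: the sets counted in both entries are empty.
-/

section ConjQuotient

variable {G : Type*} [Group G]

theorem isConj_mul_inv_mul_mul_mul_inv (σ τ a b : G) :
    IsConj (a * b⁻¹) (σ * a * τ * (σ * b * τ)⁻¹) :=
  isConj_iff.mpr ⟨σ, by group⟩

theorem isConj_mul_inv_mul_inv_mul_mul_inv (σ τ a b : G) :
    IsConj (b * a⁻¹) (σ * a⁻¹ * τ * (σ * b⁻¹ * τ)⁻¹) :=
  (isConj_iff.mpr ⟨a⁻¹, by group⟩).trans (isConj_mul_inv_mul_mul_mul_inv σ τ a⁻¹ b⁻¹)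

end ConjQuotient

theorem isConj_isoAct_mul_inv {n : ℕ} (t : Equiv.Perm (Fin n) × Equiv.Perm (Fin n) × Bool)
    (θ μ : Equiv.Perm (Fin n)) :
    IsConj (θ * μ⁻¹) (isoAct t θ * (isoAct t μ)⁻¹) ∨
      IsConj (μ * θ⁻¹) (isoAct t θ * (isoAct t μ)⁻¹) := by
  obtain ⟨σ, τ, _ | _⟩ := t
  · exact .inl (isConj_mul_inv_mul_mul_mul_inv σ τ θ μ)
  · exact .inr (isConj_mul_inv_mul_inv_mul_mul_inv σ τ θ μ)

theorem not_exists_isoAct_eq_and_isoAct_eq {n : ℕ} {Γ : Set (Equiv.Perm (Fin n))}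
    {φ ψ : Equiv.Perm (Fin n)} (h : ∀ θ ∈ Γ, ∀ μ ∈ Γ, ¬ IsConj (θ * μ⁻¹) (φ * ψ⁻¹))
    (t : Equiv.Perm (Fin n) × Equiv.Perm (Fin n) × Bool) :
    ¬ ((∃ θ ∈ Γ, isoAct t θ = φ) ∧ (∃ μ ∈ Γ, isoAct t μ = ψ)) := by
  rintro ⟨⟨θ, hθ, rfl⟩, ⟨μ, hμ, rfl⟩⟩
  rcases isConj_isoAct_mul_inv t θ μ with hc | hc
  · exact h θ hθ μ hμ hc
  · exact h μ hμ θ hθ hc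

theorem Rmat_entry_eq_zero_of_no_conj_quotient_general (n : ℕ)
    (Γ : Set (Equiv.Perm (Fin n)))
    (φ ψ : Equiv.Perm (Fin n))
    (h : ∀ θ ∈ Γ, ∀ μ ∈ Γ, ¬ IsConj (θ * μ⁻¹) (φ * ψ⁻¹)) :
    Rmat Γ φ ψ = 0 ∧ Rmat' Γ φ ψ = 0 := by
  have hempty (S : Set (Equiv.Perm (Fin n) × Equiv.Perm (Fin n) × Bool)) :
      {t | t ∈ S ∧ (∃ θ ∈ Γ, isoAct t θ = φ) ∧ (∃ θ ∈ Γ, isoAct t θ = ψ)} = ∅ :=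
    Set.eq_empty_iff_forall_notMem.mpr fun t ht =>
      not_exists_isoAct_eq_and_isoAct_eq h t ht.2
  simp only [Rmat, Rmat', hempty, Set.ncard_empty, Nat.cast_zero, zero_div, and_self]

/-- If no quotient of two elements of `Γ` is conjugate to `φψ⁻¹`, then the
`(φ,ψ)`-entries of both `R_Γ` and `R'_Γ` vanish. -/
theorem Rmat_entry_eq_zero_of_no_conj_quotient (n : ℕ)
    (Γ : Set (Equiv.Perm (Fin n))) (hΓ : Γ.Nonempty) (hΓ' : Γ ≠ Set.univ)
    (φ ψ : Equiv.Perm (Fin n))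
    (h : ∀ θ ∈ Γ, ∀ μ ∈ Γ, ¬ IsConj (θ * μ⁻¹) (φ * ψ⁻¹)) :
    Rmat Γ φ ψ = 0 ∧ Rmat' Γ φ ψ = 0 :=
  Rmat_entry_eq_zero_of_no_conj_quotient_general n Γ φ ψ h
end

section
/- Let Γ be a nonempty proper subset of Sym(n). Then for all φ, ψ ∈ Sym(n): R_Γ(φ,ψ) + ((n! − |Γ|)/|Γ|) · R'_Γ(φ,ψ) = R_Γ(id, φψ⁻¹). In particular, the matrix R_Γ + ((n! − |Γ|)/|Γ|)·R'_Γ has all diagonal entries equal to 1. -/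
open Equiv

lemma Set.ncard_inter_add_ncard_compl_inter {α : Type*} [Finite α] (A S : Set α) :
    (A ∩ S).ncard + (Aᶜ ∩ S).ncard = S.ncard := by
  rw [← Set.ncard_union_eq ((disjoint_compl_right (a := A)).mono Set.inter_subset_left
    Set.inter_subset_left), ← Set.union_inter_distrib_right, Set.union_compl_self, Set.univ_inter]

section Counting

variable {n : ℕ}

def onePreimage (t : Perm (Fin n) × Perm (Fin n) × Bool) : Perm (Fin n) :=
  if t.2.2 = false then (t.2.1 * t.1)⁻¹ else t.2.1 * t.1

lemma isoAct_eq_one_iff {t : Perm (Fin n) × Perm (Fin n) × Bool} {θ : Perm (Fin n)} :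
    isoAct t θ = 1 ↔ θ = onePreimage t := by
  rcases t with ⟨σ, τ, _ | _⟩ <;>
  · simp only [isoAct, onePreimage, mul_assoc, mul_eq_one_iff_eq_inv, if_true,
      Bool.true_eq_false, if_false]
    constructor <;> intro h <;> subst h <;> group

def onePreimageEquiv (n : ℕ) :
    Perm (Fin n) × Perm (Fin n) × Bool ≃ Perm (Fin n) × Perm (Fin n) × Bool where
  toFun t := (onePreimage t, t.2)
  invFun p := (p.2.1⁻¹ * if p.2.2 = false then p.1⁻¹ else p.1, p.2)
  left_inv := by rintro ⟨σ, τ, _ | _⟩ <;> simp [onePreimage]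
  right_inv := by rintro ⟨θ, τ, _ | _⟩ <;> simp [onePreimage]

lemma piSet_eq_preimage (Γ : Set (Perm (Fin n))) :
    PiSet Γ = onePreimageEquiv n ⁻¹' (Γ ×ˢ Set.univ) := by
  ext t
  simp [PiSet, isoAct_eq_one_iff, onePreimageEquiv]

lemma ncard_piSet (Γ : Set (Perm (Fin n))) : (PiSet Γ).ncard = Γ.ncard * (n.factorial * 2) := by
  rw [piSet_eq_preimage,
    Set.ncard_preimage_of_injective_subset_range (onePreimageEquiv n).injective
      (by simp [(onePreimageEquiv n).range_eq_univ]),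
    Set.ncard_prod, Set.ncard_univ]
  simp [Fintype.card_perm]

lemma ncard_compl_piSet (Γ : Set (Perm (Fin n))) :
    ((PiSet Γ)ᶜ.ncard : ℝ) = (n.factorial - Γ.ncard) * (n.factorial * 2) := by
  have h := Set.ncard_add_ncard_compl (PiSet Γ)
  rw [ncard_piSet, Nat.card_eq_fintype_card] at h
  simp only [Fintype.card_prod, Fintype.card_perm, Fintype.card_fin, Fintype.card_bool] at h
  have h' : (Γ.ncard * (n.factorial * 2) + (PiSet Γ)ᶜ.ncard : ℝ) =
      n.factorial * (n.factorial * 2) := by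
    exact_mod_cast h
  linarith

end Counting

section ImageContainsBoth

variable {n : ℕ}

def imageContainsBoth (Γ : Set (Perm (Fin n))) (φ ψ : Perm (Fin n)) :
    Set (Perm (Fin n) × Perm (Fin n) × Bool) :=
  {t | φ ∈ isoAct t '' Γ ∧ ψ ∈ isoAct t '' Γ}

lemma imageContainsBoth_comm (Γ : Set (Perm (Fin n))) (φ ψ : Perm (Fin n)) :
    imageContainsBoth Γ φ ψ = imageContainsBoth Γ ψ φ :=
  Set.ext fun _ => and_comm

lemma imageContainsBoth_one_subset_piSet (Γ : Set (Perm (Fin n))) (φ : Perm (Fin n)) :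
    imageContainsBoth Γ 1 φ ⊆ PiSet Γ :=
  fun _ ht => ht.1

def mulRightSnd (ρ : Perm (Fin n)) :
    Perm (Fin n) × Perm (Fin n) × Bool ≃ Perm (Fin n) × Perm (Fin n) × Bool :=
  (Equiv.refl _).prodCongr ((Equiv.mulRight ρ).prodCongr (Equiv.refl _))

lemma isoAct_mulRightSnd (ρ : Perm (Fin n)) (t : Perm (Fin n) × Perm (Fin n) × Bool)
    (θ : Perm (Fin n)) : isoAct (mulRightSnd ρ t) θ = isoAct t θ * ρ := by
  rcases t with ⟨σ, τ, ε⟩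
  cases ε <;> simp [isoAct, mulRightSnd, mul_assoc]

lemma mulRightSnd_preimage_imageContainsBoth (Γ : Set (Perm (Fin n))) (ρ φ ψ : Perm (Fin n)) :
    mulRightSnd ρ ⁻¹' imageContainsBoth Γ φ ψ = imageContainsBoth Γ (φ * ρ⁻¹) (ψ * ρ⁻¹) := by
  ext t
  simp only [imageContainsBoth, Set.mem_preimage, Set.mem_ofPred_eq, Set.mem_image,
    isoAct_mulRightSnd, ← eq_mul_inv_iff_mul_eq]

lemma ncard_imageContainsBoth (Γ : Set (Perm (Fin n))) (φ ψ : Perm (Fin n)) :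
    (imageContainsBoth Γ φ ψ).ncard = (imageContainsBoth Γ 1 (φ * ψ⁻¹)).ncard := by
  rw [imageContainsBoth_comm, ← mul_inv_cancel ψ, ← mulRightSnd_preimage_imageContainsBoth,
    Set.ncard_preimage_of_injective_subset_range (mulRightSnd ψ).injective
      (by simp [(mulRightSnd ψ).range_eq_univ])]

end ImageContainsBoth

section Matrices

variable {n : ℕ}

lemma rmat_eq (Γ : Set (Perm (Fin n))) (φ ψ : Perm (Fin n)) :
    Rmat Γ φ ψ = ((PiSet Γ ∩ imageContainsBoth Γ φ ψ).ncard : ℝ) / (PiSet Γ).ncard :=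
  rfl

lemma rmat'_eq (Γ : Set (Perm (Fin n))) (φ ψ : Perm (Fin n)) :
    Rmat' Γ φ ψ = (((PiSet Γ)ᶜ ∩ imageContainsBoth Γ φ ψ).ncard : ℝ) / (PiSet Γ)ᶜ.ncard :=
  rfl

lemma coeff_mul_rmat' (Γ : Set (Perm (Fin n))) (φ ψ : Perm (Fin n)) :
    ((n.factorial - Γ.ncard : ℝ) / Γ.ncard) * Rmat' Γ φ ψ =
      (((PiSet Γ)ᶜ ∩ imageContainsBoth Γ φ ψ).ncard : ℝ) / (PiSet Γ).ncard := by
  rw [rmat'_eq, ncard_compl_piSet, ncard_piSet]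
  push_cast
  rcases eq_or_ne ((n.factorial : ℝ) - Γ.ncard) 0 with h | h
  · -- here `Γ = Sym(n)`, so `Π' = ∅`
    have hc : ((PiSet Γ)ᶜ.ncard : ℝ) = 0 := by rw [ncard_compl_piSet, h, zero_mul]
    replace hc : (PiSet Γ)ᶜ.ncard = 0 := by exact_mod_cast hc
    have hs : ((PiSet Γ)ᶜ ∩ imageContainsBoth Γ φ ψ).ncard = 0 :=
      Nat.eq_zero_of_le_zero (hc ▸ Set.ncard_le_ncard Set.inter_subset_left)
    simp [h, hs]
  · rcases eq_or_ne (Γ.ncard : ℝ) 0 with hΓ | hΓ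
    · simp [hΓ]
    · field_simp

lemma rmat_one_one {Γ : Set (Perm (Fin n))} (hΓ : Γ.Nonempty) : Rmat Γ 1 1 = 1 := by
  have hPi : ((PiSet Γ).ncard : ℝ) ≠ 0 := by
    rw [ncard_piSet]
    exact_mod_cast Nat.mul_ne_zero hΓ.ncard_pos.ne' (by positivity)
  have h_sub : PiSet Γ ⊆ imageContainsBoth Γ 1 1 := fun _ ht => ⟨ht, ht⟩
  rw [rmat_eq, Set.inter_eq_left.mpr h_sub, div_self hPi]

end Matrices

theorem Rmat_add_Rmat'_eq_general (n : ℕ)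
    (Γ : Set (Equiv.Perm (Fin n))) (hΓ : Γ.Nonempty) :
    (∀ φ ψ : Equiv.Perm (Fin n),
      Rmat Γ φ ψ + ((n.factorial - Γ.ncard : ℝ) / (Γ.ncard : ℝ)) * Rmat' Γ φ ψ =
        Rmat Γ 1 (φ * ψ⁻¹)) ∧
    (∀ φ : Equiv.Perm (Fin n),
      Rmat Γ φ φ + ((n.factorial - Γ.ncard : ℝ) / (Γ.ncard : ℝ)) * Rmat' Γ φ φ = 1) := by
  have entry : ∀ φ ψ : Perm (Fin n),
      Rmat Γ φ ψ + ((n.factorial - Γ.ncard : ℝ) / (Γ.ncard : ℝ)) * Rmat' Γ φ ψ =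
        Rmat Γ 1 (φ * ψ⁻¹) := by
    intro φ ψ
    rw [coeff_mul_rmat', rmat_eq, rmat_eq, ← add_div, ← Nat.cast_add,
      Set.ncard_inter_add_ncard_compl_inter, ncard_imageContainsBoth,
      Set.inter_eq_right.mpr (imageContainsBoth_one_subset_piSet Γ _)]
  exact ⟨entry, fun φ => by rw [entry, mul_inv_cancel, rmat_one_one hΓ]⟩

/-- For a nonempty proper subset `Γ ⊆ Sym(n)`,
`R_Γ(φ,ψ) + ((n! − |Γ|)/|Γ|)·R'_Γ(φ,ψ) = R_Γ(id, φψ⁻¹)`; in particular the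
matrix `R_Γ + ((n! − |Γ|)/|Γ|)·R'_Γ` has all diagonal entries equal to `1`. -/
theorem Rmat_add_Rmat'_eq (n : ℕ)
    (Γ : Set (Equiv.Perm (Fin n))) (hΓ : Γ.Nonempty) (hΓ' : Γ ≠ Set.univ) :
    (∀ φ ψ : Equiv.Perm (Fin n),
      Rmat Γ φ ψ + ((n.factorial - Γ.ncard : ℝ) / (Γ.ncard : ℝ)) * Rmat' Γ φ ψ =
        Rmat Γ 1 (φ * ψ⁻¹)) ∧
    (∀ φ : Equiv.Perm (Fin n),
      Rmat Γ φ φ + ((n.factorial - Γ.ncard : ℝ) / (Γ.ncard : ℝ)) * Rmat' Γ φ φ = 1) :=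
  Rmat_add_Rmat'_eq_general n Γ hΓ
end
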